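/- arXiv:0804.3029 — 4 statements merged into one kernel-verified Lean document; each statement's English description precedes it below -/
import Mathlib

section
/- Let ℓ ≥ 1 be a fixed integer. For every integer L ≥ 2^ℓ there exist a constant c > 0 and n₀ such that for every n ≥ n₀ and every ℓ+1 words x, y₁, …, y_ℓ ∈ 𝔽ⁿ with yᵢ ≠ x for i = 1, …, ℓ, setting r = ⌊n/2⌋ − L, there exist at least c·n^{−2^{ℓ−1}}·2ⁿ words z ∈ 𝔽ⁿ with d(z,x) = r and d(z,yᵢ) > r for all i = 1, …, ℓ. -/
/-!
Sort the coordinates `j` into classes by the set `T` of indices `i` with `yᵢ j ≠ x j`, and let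
`a_T` be the size of class `T`. Flipping `x` on `k_T` coordinates of each class gives a word at
distance `∑ k_T` from `x`; it is farther than that from `yᵢ` once `2 k_T < a_T` on the nonempty
classes containing `i`, since on those classes `yᵢ` is the complement of `x`. As there are only
`2^ℓ ≤ L` classes, one can take every `k_T` within `L + 1` of `a_T / 2` with
`∑ k_T = ⌊n/2⌋ - L`. Then `C(a_T, k_T) ≥ c_L 2^{a_T} / √(a_T + 1)`, and the product over the
`2^ℓ` classes is at least `c 2ⁿ / n^{2^{ℓ-1}}`.
-/

open Finset

/-- The Hamming ball of radius `r` around `x` in `𝔽ⁿ = {0,1}ⁿ`. -/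
def ballH (n r : ℕ) (x : Fin n → Bool) : Finset (Fin n → Bool) :=
  Finset.univ.filter (fun y => hammingDist x y ≤ r)

/-- `C` is an `(r, ≤ ℓ)`-identifying code in `𝔽ⁿ`. -/
def IdCode (n r ℓ : ℕ) (C : Finset (Fin n → Bool)) : Prop :=
  C.Nonempty ∧ ∀ X Y : Finset (Fin n → Bool),
    X.card ≤ ℓ → Y.card ≤ ℓ → X ≠ Y →
      (X.biUnion (ballH n r)) ∩ C ≠ (Y.biUnion (ballH n r)) ∩ C

/-- The smallest cardinality of an `(r, ≤ ℓ)`-identifying code in `𝔽ⁿ`. -/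
noncomputable def Mid (n r ℓ : ℕ) : ℕ :=
  sInf {k | ∃ C : Finset (Fin n → Bool), IdCode n r ℓ C ∧ C.card = k}

/-- binary entropy -/
noncomputable def binH (x : ℝ) : ℝ :=
  -(x * Real.logb 2 x) - (1 - x) * Real.logb 2 (1 - x)

/-- m_n(r,ℓ) -/
noncomputable def mlow (n r ℓ : ℕ) : ℕ :=
  sInf {k | ∃ X Y : Finset (Fin n → Bool), X ≠ Y ∧ 1 ≤ X.card ∧ X.card ≤ ℓ ∧
    1 ≤ Y.card ∧ Y.card ≤ ℓ ∧
    (symmDiff (X.biUnion (ballH n r)) (Y.biUnion (ballH n r))).card = k}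

/-- N_ℓ : the number of unordered pairs {X, Y} of distinct subsets with 1 ≤ card ≤ ℓ. -/
def Npairs (n ℓ : ℕ) : ℕ :=
  (((Finset.univ : Finset (Finset (Fin n → Bool))).filter
      (fun X => 1 ≤ X.card ∧ X.card ≤ ℓ)).powersetCard 2).card

namespace Nat

/-- By Wallis, `centralBinom m ^ 2 ∼ 16 ^ m / (π m)`; `4 m + 1` is an affine factor for which the
induction step still closes. -/
theorem sixteen_pow_le_mul_sq_centralBinom (m : ℕ) :
    16 ^ m ≤ (4 * m + 1) * m.centralBinom ^ 2 := by
  induction m with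
  | zero => simp
  | succ m ih =>
    have key : 16 ^ (m + 1) * (m + 1) ^ 2 ≤
        (4 * (m + 1) + 1) * centralBinom (m + 1) ^ 2 * (m + 1) ^ 2 := by
      have hpoly : 4 * (4 * m + 1) * (m + 1) ^ 2 ≤ (4 * m + 5) * (2 * m + 1) ^ 2 := by
        ring_nf; omega
      calc 16 ^ (m + 1) * (m + 1) ^ 2 = 16 * 16 ^ m * (m + 1) ^ 2 := by ring
        _ ≤ 16 * ((4 * m + 1) * m.centralBinom ^ 2) * (m + 1) ^ 2 := by gcongr
        _ ≤ (4 * m + 5) * (2 * (2 * m + 1) * m.centralBinom) ^ 2 := by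
          nlinarith [Nat.zero_le (m.centralBinom ^ 2)]
        _ = (4 * (m + 1) + 1) * centralBinom (m + 1) ^ 2 * (m + 1) ^ 2 := by
          rw [← succ_mul_centralBinom_succ]; ring
    exact Nat.le_of_mul_le_mul_right key (by positivity)

theorem four_pow_le_mul_sq_choose_half (a : ℕ) : 4 ^ a ≤ 4 * (a + 1) * a.choose (a / 2) ^ 2 := by
  obtain ⟨m, rfl | rfl⟩ := a.even_or_odd'
  · rw [show 2 * m / 2 = m by omega, ← centralBinom_eq_two_mul_choose, pow_mul]
    calc (4 ^ 2) ^ m ≤ (4 * m + 1) * m.centralBinom ^ 2 := sixteen_pow_le_mul_sq_centralBinom m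
      _ ≤ 4 * (2 * m + 1) * m.centralBinom ^ 2 := by gcongr; omega
  · have hodd : centralBinom (m + 1) = 2 * (2 * m + 1).choose m := by
      rw [centralBinom_eq_two_mul_choose, show 2 * (m + 1) = 2 * m + 1 + 1 by ring,
        choose_succ_succ, choose_symm_half]
      ring
    have h := sixteen_pow_le_mul_sq_centralBinom (m + 1)
    rw [hodd] at h
    rw [show (2 * m + 1) / 2 = m by omega]
    have : 4 ^ (2 * m + 1) * 4 = 16 ^ (m + 1) := by rw [pow_succ, pow_mul]; ring
    nlinarith [Nat.zero_le ((2 * m + 1).choose m ^ 2)]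

theorem choose_add_le_pow_mul_choose {a k q : ℕ} (h : a ≤ (q + 1) * k + q) (d : ℕ) :
    a.choose (k + d) ≤ q ^ d * a.choose k := by
  induction d with
  | zero => simp
  | succ d ih =>
    have hstep : a.choose (k + d + 1) * (k + d + 1) ≤ q * a.choose (k + d) * (k + d + 1) := by
      rw [choose_succ_right_eq, mul_comm q, mul_assoc]
      have hk : a - (k + d) ≤ q * (k + 1) := by ring_nf at h ⊢; omega
      exact Nat.mul_le_mul_left _ (hk.trans (Nat.mul_le_mul_left _ (by omega)))
    calc a.choose (k + (d + 1)) ≤ q * a.choose (k + d) :=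
          Nat.le_of_mul_le_mul_right hstep (by omega)
      _ ≤ q * (q ^ d * a.choose k) := by gcongr
      _ = q ^ (d + 1) * a.choose k := by ring

theorem four_pow_le_mul_sq_choose_of_near_half {a k L : ℕ} (h₁ : 2 * k ≤ a)
    (h₂ : a ≤ 2 * k + 2 * L + 2) :
    4 ^ a ≤ 4 * (a + 1) * ((2 * L + 2) ^ (L + 1) * a.choose k) ^ 2 := by
  have hd : a / 2 = k + (a / 2 - k) := by omega
  have hdown : a.choose (a / 2) ≤ (2 * L + 2) ^ (L + 1) * a.choose k := by
    calc a.choose (a / 2) ≤ (2 * L + 2) ^ (a / 2 - k) * a.choose k := by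
          nth_rw 1 [hd]; exact choose_add_le_pow_mul_choose (by nlinarith) _
      _ ≤ (2 * L + 2) ^ (L + 1) * a.choose k := by gcongr <;> omega
  calc 4 ^ a ≤ 4 * (a + 1) * a.choose (a / 2) ^ 2 := four_pow_le_mul_sq_choose_half a
    _ ≤ _ := by gcongr

end Nat

theorem Finset.exists_le_sum_eq {ι : Type*} [Fintype ι] [DecidableEq ι] (c : ι → ℕ) {s : ℕ}
    (hs : s ≤ ∑ i, c i) : ∃ k : ι → ℕ, k ≤ c ∧ ∑ i, k i = s := by
  induction s with
  | zero => exact ⟨0, fun _ => Nat.zero_le _, by simp⟩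
  | succ s ih =>
    obtain ⟨k, hkc, hks⟩ := ih (by omega)
    obtain ⟨i₀, hi₀⟩ : ∃ i, k i < c i := by
      by_contra! hge
      have : ∑ i, c i ≤ ∑ i, k i := sum_le_sum fun i _ => hge i
      omega
    refine ⟨Function.update k i₀ (k i₀ + 1), fun i => ?_, ?_⟩
    · rcases eq_or_ne i i₀ with rfl | hi
      · simpa using hi₀
      · simpa [hi] using hkc i
    · rw [sum_update_of_mem (mem_univ i₀), ← hks, ← add_sum_erase _ _ (mem_univ i₀),
        sdiff_singleton_eq_erase]
      ring

theorem exists_near_half_parts {ι : Type*} [Fintype ι] [DecidableEq ι] (a : ι → ℕ) {r L : ℕ}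
    (h₁ : r + Fintype.card ι ≤ (∑ i, a i) / 2) (h₂ : (∑ i, a i) / 2 ≤ r + L) :
    ∃ k : ι → ℕ, ∑ i, k i = r ∧ ∀ i, (2 * k i < a i ∨ k i = 0) ∧ a i ≤ 2 * k i + 2 * L + 2 := by
  set c : ι → ℕ := fun i => (a i - 1) / 2
  have hc : ∀ i, 2 * c i ≤ a i ∧ a i ≤ 2 * c i + 2 ∧ (2 * c i < a i ∨ c i = 0) := fun i => by
    simp only [c]; omega
  have hc_le : ∑ i, 2 * c i ≤ ∑ i, a i := sum_le_sum fun i _ => (hc i).1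
  have hc_ge : ∑ i, a i ≤ ∑ i, (2 * c i + 2) := sum_le_sum fun i _ => (hc i).2.1
  rw [sum_add_distrib, sum_const, card_univ, smul_eq_mul, ← mul_sum] at hc_ge
  rw [← mul_sum] at hc_le
  obtain ⟨k, hkc, hks⟩ := exists_le_sum_eq c (s := r) (by omega)
  have hslack : ∀ i, c i - k i ≤ L := fun i => by
    have hsub : ∑ j, (c j - k j) = ∑ j, c j - ∑ j, k j := sum_tsub_distrib _ fun j _ => hkc j
    have := single_le_sum (f := fun j => c j - k j) (fun j _ => Nat.zero_le _) (mem_univ i)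
    omega
  exact ⟨k, hks, fun i => by have : k i ≤ c i := hkc i; have := hc i; have := hslack i; omega⟩

section Flip

variable {ι : Type*} [DecidableEq ι]

def flipOn (x : ι → Bool) (S : Finset ι) (j : ι) : Bool := if j ∈ S then !x j else x j

theorem flipOn_injective (x : ι → Bool) : Function.Injective (flipOn x) := by
  intro S S' h
  ext j
  have := congrFun h j
  by_cases hS : j ∈ S <;> by_cases hS' : j ∈ S' <;> simp_all [flipOn]

theorem hammingDist_flipOn_add [Fintype ι] (x w : ι → Bool) (S : Finset ι) :
    hammingDist (flipOn x S) w + 2 * #{j ∈ S | x j ≠ w j} = #S + hammingDist x w := by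
  have hS : S = ({j | j ∈ S} : Finset ι) := by ext; simp
  have hSD : ({j ∈ S | x j ≠ w j} : Finset ι) = ({j | j ∈ S ∧ x j ≠ w j} : Finset ι) := by
    ext; simp
  rw [hSD, hS, hammingDist, hammingDist]
  simp only [card_filter, mul_sum, ← sum_add_distrib]
  refine sum_congr rfl fun j _ => ?_
  by_cases hj : j ∈ S <;> cases hx : x j <;> cases w j <;> simp [flipOn, hj, hx]

end Flip

theorem Finset.card_filter_forall_card_fiber_eq {α β : Type*} [Fintype α] [DecidableEq α]
    [Fintype β] [DecidableEq β] (f : α → β) (k : β → ℕ) :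
    #{S : Finset α | ∀ b, #{j ∈ S | f j = b} = k b} = ∏ b, (#{j | f j = b}).choose (k b) := by
  simp_rw [← card_powersetCard, ← Fintype.card_piFinset]
  symm
  have hfiber : ∀ g : β → Finset α, (∀ b, ∀ j ∈ g b, f j = b) → ∀ b,
      ({j ∈ univ.biUnion g | f j = b} : Finset α) = g b := by
    intro g hg b
    ext j
    simp only [mem_filter, mem_biUnion, mem_univ, true_and]
    constructor
    · rintro ⟨⟨b', hj⟩, rfl⟩
      rwa [hg b' j hj]
    · exact fun hj => ⟨⟨b, hj⟩, hg b j hj⟩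
  refine card_nbij' (fun g => univ.biUnion g) (fun S b => {j ∈ S | f j = b}) ?_ ?_ ?_ ?_
  · intro g hg
    simp only [mem_coe, Fintype.mem_piFinset, mem_powersetCard, subset_iff, mem_filter_univ] at hg
    simp [hfiber g fun b => (hg b).1, (hg _).2]
  · intro S hS
    simp only [coe_filter, mem_univ, true_and, Set.mem_ofPred_eq] at hS
    simp [subset_iff, hS]
  · intro g hg
    simp only [mem_coe, Fintype.mem_piFinset, mem_powersetCard, subset_iff, mem_filter_univ] at hg
    exact funext (hfiber g fun b => (hg b).1)
  · intro S _
    ext j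
    simp

theorem Finset.card_filter_mem_eq_sum_card_fiber {α β : Type*} [DecidableEq β] (s : Finset α)
    (f : α → β) (U : Finset β) : #{j ∈ s | f j ∈ U} = ∑ b ∈ U, #{j ∈ s | f j = b} := by
  rw [card_eq_sum_card_fiberwise (s := {j ∈ s | f j ∈ U}) (t := U)
    fun j hj => (mem_filter.1 hj).2]
  refine sum_congr rfl fun b hb => ?_
  rw [filter_filter]
  congr 1
  exact filter_congr fun j _ => ⟨And.right, fun h => ⟨h ▸ hb, h⟩⟩

section Patterns

variable {ι κ : Type*} [Fintype ι] [Fintype κ] [DecidableEq κ]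

def disagreement (x : ι → Bool) (y : κ → ι → Bool) (j : ι) : Finset κ := {i | x j ≠ y i j}

theorem two_mul_card_filter_ne_lt_hammingDist {x : ι → Bool} {y : κ → ι → Bool} {i : κ}
    (hy : y i ≠ x) {S : Finset ι} {k : Finset κ → ℕ}
    (hS : ∀ T, #{j ∈ S | disagreement x y j = T} = k T)
    (hk : ∀ T, 2 * k T < #{j | disagreement x y j = T} ∨ k T = 0) :
    2 * #{j ∈ S | x j ≠ y i j} < hammingDist x (y i) := by
  have hiff : ∀ j, x j ≠ y i j ↔ disagreement x y j ∈ ({T | i ∈ T} : Finset (Finset κ)) := by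
    simp [disagreement]
  obtain ⟨j₀, hj₀⟩ := Function.ne_iff.1 hy
  rw [hammingDist, filter_congr fun j _ => hiff j, filter_congr fun j _ => hiff j,
    card_filter_mem_eq_sum_card_fiber, card_filter_mem_eq_sum_card_fiber, mul_sum]
  simp only [hS]
  refine sum_lt_sum (fun T _ => by have := hk T; omega) ⟨disagreement x y j₀, ?_, ?_⟩
  · simpa [disagreement] using Ne.symm hj₀
  · have : 0 < #{j | disagreement x y j = disagreement x y j₀} := card_pos.2 ⟨j₀, by simp⟩
    have := hk (disagreement x y j₀)
    omega

theorem prod_choose_le_card_hammingDist [DecidableEq ι] (x : ι → Bool) (y : κ → ι → Bool)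
    (hy : ∀ i, y i ≠ x) (k : Finset κ → ℕ)
    (hk : ∀ T, 2 * k T < #{j | disagreement x y j = T} ∨ k T = 0) :
    ∏ T, (#{j | disagreement x y j = T}).choose (k T) ≤
      #{z | hammingDist z x = ∑ T, k T ∧ ∀ i, ∑ T, k T < hammingDist z (y i)} := by
  rw [← card_filter_forall_card_fiber_eq]
  refine card_le_card_of_injOn (flipOn x) (fun S hS => ?_) (flipOn_injective x).injOn
  simp only [coe_filter, mem_univ, true_and, Set.mem_ofPred_eq] at hS ⊢
  have hcard : #S = ∑ T, k T := by
    rw [card_eq_sum_card_fiberwise (f := disagreement x y) (t := univ) (by simp)]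
    simp [hS]
  refine ⟨?_, fun i => ?_⟩
  · simpa [hcard] using hammingDist_flipOn_add x x S
  · have := hammingDist_flipOn_add x (y i) S
    have := two_mul_card_filter_ne_lt_hammingDist (hy i) hS hk
    omega

theorem two_pow_le_mul_card_hammingDist [DecidableEq ι] {L : ℕ} (hL : 2 ^ Fintype.card κ ≤ L)
    (hn : 2 * L ≤ Fintype.card ι) (x : ι → Bool) (y : κ → ι → Bool) (hy : ∀ i, y i ≠ x) :
    2 ^ Fintype.card ι ≤ (4 * (Fintype.card ι + 1)) ^ 2 ^ (Fintype.card κ - 1) *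
      ((2 * L + 2) ^ (L + 1)) ^ 2 ^ Fintype.card κ *
        #{z | hammingDist z x = Fintype.card ι / 2 - L ∧
          ∀ i, Fintype.card ι / 2 - L < hammingDist z (y i)} := by
  set n := Fintype.card ι
  set K := (2 * L + 2) ^ (L + 1)
  set N := #{z | hammingDist z x = n / 2 - L ∧ ∀ i, n / 2 - L < hammingDist z (y i)}
  set a : Finset κ → ℕ := fun T => #{j | disagreement x y j = T}
  have ha : ∑ T, a T = n := (card_eq_sum_card_fiberwise (by simp)).symm
  obtain ⟨k, hks, hk⟩ := exists_near_half_parts a (r := n / 2 - L) (L := L)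
    (by rw [ha, Fintype.card_finset]; omega) (by omega)
  have hcount : ∏ T, (a T).choose (k T) ≤ N := by
    simpa only [hks] using prod_choose_le_card_hammingDist x y hy k fun T => (hk T).1
  -- Squaring avoids the `√(a T + 1)` of the binomial estimate.
  refine (Nat.pow_le_pow_iff_left two_ne_zero).1 ?_
  calc (2 ^ n) ^ 2 = ∏ T, 4 ^ a T := by
        rw [prod_pow_eq_pow_sum, ha, ← pow_mul, pow_mul']; norm_num
    _ ≤ ∏ T, 4 * (a T + 1) * (K * (a T).choose (k T)) ^ 2 :=
      prod_le_prod' fun T _ =>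
        Nat.four_pow_le_mul_sq_choose_of_near_half (by have := (hk T).1; omega) (hk T).2
    _ = (∏ T, 4 * (a T + 1)) * (K ^ 2 ^ Fintype.card κ * ∏ T, (a T).choose (k T)) ^ 2 := by
      simp only [prod_mul_distrib, prod_pow, prod_const, card_univ, Fintype.card_finset]
    _ ≤ (4 * (n + 1)) ^ 2 ^ Fintype.card κ * (K ^ 2 ^ Fintype.card κ * N) ^ 2 := by
      gcongr
      have hle : ∀ T ∈ univ, 4 * (a T + 1) ≤ 4 * (n + 1) := fun T _ => by
        have : a T ≤ n := card_le_univ _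
        omega
      simpa using prod_le_pow_card univ _ _ hle
    _ ≤ (4 * (n + 1)) ^ (2 ^ (Fintype.card κ - 1) * 2) * (K ^ 2 ^ Fintype.card κ * N) ^ 2 := by
      gcongr
      · omega
      · rw [← pow_succ]; exact Nat.pow_le_pow_right two_pos (by omega)
    _ = _ := by ring

end Patterns

theorem many_words_at_exact_distance_near_half_general (ℓ L : ℕ) (hL : 2 ^ ℓ ≤ L) :
    ∃ (c : ℝ), 0 < c ∧ ∃ n₀ : ℕ, ∀ n : ℕ, n₀ ≤ n →
      ∀ (x : Fin n → Bool) (y : Fin ℓ → (Fin n → Bool)), (∀ i, y i ≠ x) →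
        c * (n : ℝ) ^ (-((2 : ℝ) ^ (ℓ - 1))) * 2 ^ n ≤
          ((Finset.univ.filter (fun z : Fin n → Bool =>
            hammingDist z x = n / 2 - L ∧ ∀ i, n / 2 - L < hammingDist z (y i))).card : ℝ) := by
  set E := 2 ^ (ℓ - 1)
  set K := ((2 * L + 2) ^ (L + 1)) ^ 2 ^ ℓ
  refine ⟨1 / (8 ^ E * K), by positivity, 2 * L + 1, fun n hn x y hy => ?_⟩
  have hcount := two_pow_le_mul_card_hammingDist (ι := Fin n) (κ := Fin ℓ) (L := L)
    (by simpa using hL) (by simp; omega) x y hy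
  simp only [Fintype.card_fin] at hcount
  set N := #{z | hammingDist z x = n / 2 - L ∧ ∀ i, n / 2 - L < hammingDist z (y i)}
  have hn_one : (1 : ℝ) ≤ n := by exact_mod_cast (show 1 ≤ n by omega)
  have hcountR : (2 : ℝ) ^ n ≤ (4 * (n + 1)) ^ E * K * N := by exact_mod_cast hcount
  rw [show -(2 : ℝ) ^ (ℓ - 1) = -(E : ℝ) by simp [E], Real.rpow_neg (by linarith),
    Real.rpow_natCast, one_div, ← mul_inv, mul_assoc, inv_mul_eq_div, div_le_iff₀ (by positivity)]
  calc (2 : ℝ) ^ n ≤ (4 * (n + 1)) ^ E * K * N := hcountR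
    _ ≤ (8 * n) ^ E * K * N := by gcongr ?_ ^ E * _ * _; linarith
    _ = _ := by ring

/-- For fixed `ℓ ≥ 1` and every `L ≥ 2^ℓ` there are `c > 0` and `n₀` such that
for all `n ≥ n₀`, all words `x, y₁, …, y_ℓ` with `yᵢ ≠ x`, and `r = ⌊n/2⌋ - L`,
at least `c·n^{-2^{ℓ-1}}·2ⁿ` words `z` satisfy `d(z,x) = r` and `d(z,yᵢ) > r` for all `i`. -/
theorem many_words_at_exact_distance_near_half (ℓ L : ℕ) (hℓ : 1 ≤ ℓ) (hL : 2 ^ ℓ ≤ L) :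
    ∃ (c : ℝ), 0 < c ∧ ∃ n₀ : ℕ, ∀ n : ℕ, n₀ ≤ n →
      ∀ (x : Fin n → Bool) (y : Fin ℓ → (Fin n → Bool)), (∀ i, y i ≠ x) →
        c * (n : ℝ) ^ (-((2 : ℝ) ^ (ℓ - 1))) * 2 ^ n ≤
          ((Finset.univ.filter (fun z : Fin n → Bool =>
            hammingDist z x = n / 2 - L ∧ ∀ i, n / 2 - L < hammingDist z (y i))).card : ℝ) :=
  many_words_at_exact_distance_near_half_general ℓ L hL
end

section
/- Let r ≥ 1, ℓ ≥ 1 and n ≥ 1, and suppose m_n(r,ℓ) > 0. Then M_r^{(≤ℓ)}(n) ≤ 2^{n+1}·ℓ·n / m_n(r,ℓ) + 2. -/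
open Finset

/-!
Call `C` a transversal if it meets every `B_r(X) △ B_r(Y)` with `X ≠ Y` nonempty of size at most
`ℓ`. A transversal separates all such pairs, and at most one ball `B_r(x₀)` can miss it (the
singletons `{x}, {x₀}` are separated), so adding `x₀` also separates `∅` from everything else.
There are at most `(2^(nℓ))²` of these sets (each such `X` is the image of a map `Fin ℓ → 𝔽ⁿ`),
each of size at least `m = m_n(r,ℓ)`, so some point lies in a fraction `m/2ⁿ` of them; choosing
such points greedily, after `t` steps at most `2^(2nℓ)(1 - m/2ⁿ)^t ≤ e^(2nℓ - mt/2ⁿ)` sets are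
unmet, which is `< 1` once `t > 2^(n+1)ℓn/m`.
-/

namespace Finset

variable {α : Type*} [DecidableEq α]

theorem exists_image_eq_of_card_le {X : Finset α} (hX : X.Nonempty) {ℓ : ℕ} (hℓ : #X ≤ ℓ) :
    ∃ f : Fin ℓ → α, univ.image f = X := by
  obtain ⟨x₀, hx₀⟩ := hX
  refine ⟨fun i => X.toList.getD i x₀, subset_antisymm ?_ fun y hy => ?_⟩
  · intro y hy
    obtain ⟨i, -, rfl⟩ := mem_image.1 hy
    rw [List.getD_eq_getElem?_getD]
    cases h : X.toList[(i : ℕ)]? with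
    | none => exact hx₀
    | some z => simpa using List.mem_of_getElem? h
  · obtain ⟨i, hi, rfl⟩ := List.mem_iff_getElem.1 (mem_toList.2 hy)
    have hiℓ : i < ℓ := (length_toList X ▸ hi).trans_le hℓ
    exact mem_image.2 ⟨⟨i, hiℓ⟩, mem_univ _, List.getD_eq_getElem _ _ hi⟩

variable [Fintype α]

theorem card_filter_nonempty_card_le_le_pow (ℓ : ℕ) :
    #{X : Finset α | X.Nonempty ∧ #X ≤ ℓ} ≤ Fintype.card α ^ ℓ :=
  calc #{X : Finset α | X.Nonempty ∧ #X ≤ ℓ}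
      ≤ #(univ.image fun f : Fin ℓ → α => univ.image f) := card_le_card fun X hX => by
        obtain ⟨f, hf⟩ := exists_image_eq_of_card_le (mem_filter.1 hX).2.1 (mem_filter.1 hX).2.2
        exact mem_image.2 ⟨f, mem_univ _, hf⟩
    _ ≤ Fintype.card α ^ ℓ := card_image_le.trans (by simp)

theorem sum_card_filter_mem_eq_sum_card (𝒟 : Finset (Finset α)) :
    ∑ x, #{D ∈ 𝒟 | x ∈ D} = ∑ D ∈ 𝒟, #D := by
  simp_rw [card_eq_sum_ones, sum_filter]
  rw [sum_comm]
  simp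

theorem exists_mul_card_le_card_mul_card_filter_mem [Nonempty α] {𝒟 : Finset (Finset α)} {m : ℕ}
    (h𝒟 : ∀ D ∈ 𝒟, m ≤ #D) : ∃ x, m * #𝒟 ≤ Fintype.card α * #{D ∈ 𝒟 | x ∈ D} := by
  obtain ⟨x, -, hx⟩ := exists_le_of_sum_le (s := univ) (f := fun _ => m * #𝒟)
      (g := fun x => Fintype.card α * #{D ∈ 𝒟 | x ∈ D}) univ_nonempty <| by
    rw [sum_const, card_univ, smul_eq_mul, ← mul_sum, sum_card_filter_mem_eq_sum_card]
    exact Nat.mul_le_mul_left _ (by simpa [mul_comm] using card_nsmul_le_sum 𝒟 card m h𝒟)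
  exact ⟨x, hx⟩

theorem exists_card_filter_notMem_le [Nonempty α] {𝒟 : Finset (Finset α)} {m : ℕ}
    (h𝒟 : ∀ D ∈ 𝒟, m ≤ #D) :
    ∃ x, (#{D ∈ 𝒟 | x ∉ D} : ℝ) ≤ #𝒟 * (1 - m / Fintype.card α) := by
  obtain ⟨x, hx⟩ := exists_mul_card_le_card_mul_card_filter_mem h𝒟
  refine ⟨x, ?_⟩
  have hN : (0 : ℝ) < Fintype.card α := by exact_mod_cast Fintype.card_pos
  have hdeg : (m * #𝒟 : ℝ) / Fintype.card α ≤ #{D ∈ 𝒟 | x ∈ D} := by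
    rw [div_le_iff₀ hN, mul_comm _ (Fintype.card α : ℝ)]
    exact_mod_cast hx
  have hsplit : (#{D ∈ 𝒟 | x ∈ D} + #{D ∈ 𝒟 | x ∉ D} : ℝ) = #𝒟 := by
    exact_mod_cast card_filter_add_card_filter_not (s := 𝒟) (x ∈ ·)
  calc (#{D ∈ 𝒟 | x ∉ D} : ℝ) ≤ #𝒟 - m * #𝒟 / Fintype.card α := by linarith
    _ = #𝒟 * (1 - m / Fintype.card α) := by ring

theorem exists_hitting_set_card_le_of_card_lt_exp {𝒟 : Finset (Finset α)} {m : ℕ}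
    (h𝒟 : ∀ D ∈ 𝒟, m ≤ #D) (t : ℕ) (ht : (#𝒟 : ℝ) < Real.exp (m * t / Fintype.card α)) :
    ∃ C : Finset α, #C ≤ t ∧ ∀ D ∈ 𝒟, (D ∩ C).Nonempty := by
  induction t generalizing 𝒟 with
  | zero =>
    have : 𝒟 = ∅ := by simpa using ht
    exact ⟨∅, by simp [this]⟩
  | succ t ih =>
    rcases isEmpty_or_nonempty α with hα | hα
    · have : 𝒟 = ∅ := by simpa using ht
      exact ⟨∅, by simp [this]⟩
    obtain ⟨x, hx⟩ := exists_card_filter_notMem_le h𝒟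
    obtain ⟨C, hCt, hC⟩ := ih (𝒟 := {D ∈ 𝒟 | x ∉ D}) (fun D hD => h𝒟 D (mem_filter.1 hD).1) <| by
      calc (#{D ∈ 𝒟 | x ∉ D} : ℝ) ≤ #𝒟 * Real.exp (-(m / Fintype.card α)) :=
            hx.trans (by gcongr; exact Real.one_sub_le_exp_neg _)
        _ < Real.exp (m * (t + 1 : ℕ) / Fintype.card α) * Real.exp (-(m / Fintype.card α)) := by
            gcongr
        _ = Real.exp (m * t / Fintype.card α) := by
            rw [← Real.exp_add]; push_cast; ring_nf
    refine ⟨insert x C, (card_insert_le _ _).trans (by omega), fun D hD => ?_⟩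
    by_cases hxD : x ∈ D
    · exact ⟨x, mem_inter.2 ⟨hxD, mem_insert_self _ _⟩⟩
    · obtain ⟨c, hc⟩ := hC D (mem_filter.2 ⟨hD, hxD⟩)
      exact ⟨c, inter_subset_inter_left (subset_insert _ _) hc⟩

end Finset

section BallUnions

variable {α : Type*} [Fintype α] [DecidableEq α] (B : α → Finset α) (ℓ : ℕ)

def ballUnionSymmDiffs : Finset (Finset α) :=
  ({p | p.1.Nonempty ∧ #p.1 ≤ ℓ ∧ p.2.Nonempty ∧ #p.2 ≤ ℓ ∧ p.1 ≠ p.2} :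
    Finset (Finset α × Finset α)).image fun p => symmDiff (p.1.biUnion B) (p.2.biUnion B)

variable {B ℓ}

theorem symmDiff_mem_ballUnionSymmDiffs {X Y : Finset α} (hX : X.Nonempty) (hXℓ : #X ≤ ℓ)
    (hY : Y.Nonempty) (hYℓ : #Y ≤ ℓ) (hXY : X ≠ Y) :
    symmDiff (X.biUnion B) (Y.biUnion B) ∈ ballUnionSymmDiffs B ℓ :=
  mem_image.2 ⟨(X, Y), by simp [hX, hXℓ, hY, hYℓ, hXY], rfl⟩

theorem card_ballUnionSymmDiffs_le : #(ballUnionSymmDiffs B ℓ) ≤ (Fintype.card α ^ ℓ) ^ 2 := by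
  set S : Finset (Finset α) := {X | X.Nonempty ∧ #X ≤ ℓ}
  calc #(ballUnionSymmDiffs B ℓ) ≤ #(S ×ˢ S) :=
        card_image_le.trans <| card_le_card fun p hp => by simp_all [S]
    _ = #S ^ 2 := by rw [card_product, sq]
    _ ≤ _ := Nat.pow_le_pow_left (card_filter_nonempty_card_le_le_pow ℓ) 2

variable {C : Finset α}

theorem biUnion_inter_ne_biUnion_inter (hcover : ∀ x, (B x ∩ C).Nonempty)
    (hC : ∀ D ∈ ballUnionSymmDiffs B ℓ, (D ∩ C).Nonempty) {X Y : Finset α} (hXℓ : #X ≤ ℓ)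
    (hYℓ : #Y ≤ ℓ) (hXY : X ≠ Y) : X.biUnion B ∩ C ≠ Y.biUnion B ∩ C := by
  suffices (symmDiff (X.biUnion B) (Y.biUnion B) ∩ C).Nonempty by
    obtain ⟨c, hc⟩ := this
    intro h
    rw [mem_inter, mem_symmDiff] at hc
    rcases hc with ⟨⟨hcX, hcY⟩ | ⟨hcY, hcX⟩, hcC⟩
    · exact hcY (mem_inter.1 (h ▸ mem_inter.2 ⟨hcX, hcC⟩)).1
    · exact hcX (mem_inter.1 (h.symm ▸ mem_inter.2 ⟨hcY, hcC⟩)).1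
  rcases X.eq_empty_or_nonempty with rfl | hX
  · obtain ⟨y, hy⟩ := nonempty_iff_ne_empty.2 hXY.symm
    rw [biUnion_empty, ← bot_eq_empty, bot_symmDiff]
    exact (hcover y).mono (inter_subset_inter_right (subset_biUnion_of_mem B hy))
  rcases Y.eq_empty_or_nonempty with rfl | hY
  · obtain ⟨x, hx⟩ := hX
    rw [biUnion_empty, ← bot_eq_empty, symmDiff_bot]
    exact (hcover x).mono (inter_subset_inter_right (subset_biUnion_of_mem B hx))
  exact hC _ (symmDiff_mem_ballUnionSymmDiffs hX hXℓ hY hYℓ hXY)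

theorem exists_superset_card_le_forall_inter_nonempty (hB : ∀ x, x ∈ B x) (hℓ : 1 ≤ ℓ)
    (hC : ∀ D ∈ ballUnionSymmDiffs B ℓ, (D ∩ C).Nonempty) :
    ∃ C', C ⊆ C' ∧ #C' ≤ #C + 1 ∧ ∀ x, (B x ∩ C').Nonempty := by
  by_cases hcover : ∀ x, (B x ∩ C).Nonempty
  · exact ⟨C, Subset.rfl, Nat.le_succ _, hcover⟩
  obtain ⟨x₀, hx₀⟩ := not_forall.1 hcover
  refine ⟨insert x₀ C, subset_insert _ _, card_insert_le _ _, fun x => ?_⟩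
  by_cases hx : x = x₀
  · exact ⟨x₀, mem_inter.2 ⟨hx ▸ hB x, mem_insert_self _ _⟩⟩
  -- the singletons `{x}, {x₀}` are separated by a point of `C`, which cannot lie in `B x₀`
  obtain ⟨c, hc⟩ := hC _ (symmDiff_mem_ballUnionSymmDiffs (singleton_nonempty x)
    (by simpa using hℓ) (singleton_nonempty x₀) (by simpa using hℓ) (by simpa using hx))
  rw [singleton_biUnion, singleton_biUnion, mem_inter, mem_symmDiff] at hc
  rcases hc with ⟨⟨hcx, -⟩ | ⟨hcx₀, -⟩, hcC⟩
  · exact ⟨c, mem_inter.2 ⟨hcx, mem_insert_of_mem hcC⟩⟩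
  · exact absurd ⟨c, mem_inter.2 ⟨hcx₀, hcC⟩⟩ hx₀

end BallUnions

section Hamming

variable {n r ℓ : ℕ}

theorem mem_ballH_self (x : Fin n → Bool) : x ∈ ballH n r x := by
  simp [ballH]

theorem mlow_le_card_of_mem_ballUnionSymmDiffs {D : Finset (Fin n → Bool)}
    (hD : D ∈ ballUnionSymmDiffs (ballH n r) ℓ) : mlow n r ℓ ≤ #D := by
  obtain ⟨⟨X, Y⟩, hp, rfl⟩ := mem_image.1 hD
  obtain ⟨hX, hXℓ, hY, hYℓ, hXY⟩ := (mem_filter.1 hp).2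
  exact Nat.sInf_le ⟨X, Y, hXY, one_le_card.2 hX, hXℓ, one_le_card.2 hY, hYℓ, rfl⟩

theorem idCode_of_forall_inter_nonempty {C : Finset (Fin n → Bool)}
    (hcover : ∀ x, (ballH n r x ∩ C).Nonempty)
    (hC : ∀ D ∈ ballUnionSymmDiffs (ballH n r) ℓ, (D ∩ C).Nonempty) : IdCode n r ℓ C :=
  ⟨(hcover fun _ => false).mono inter_subset_right,
    fun _ _ => biUnion_inter_ne_biUnion_inter hcover hC⟩

theorem Mid_le_card {C : Finset (Fin n → Bool)} (hC : IdCode n r ℓ C) : Mid n r ℓ ≤ #C :=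
  Nat.sInf_le ⟨C, hC, rfl⟩

theorem card_ballUnionSymmDiffs_lt_exp (hm : 0 < mlow n r ℓ) :
    (#(ballUnionSymmDiffs (ballH n r) ℓ) : ℝ) < Real.exp (mlow n r ℓ *
      (⌊(2 : ℝ) ^ (n + 1) * ℓ * n / mlow n r ℓ⌋₊ + 1 : ℕ) / Fintype.card (Fin n → Bool)) := by
  have hcard : Fintype.card (Fin n → Bool) = 2 ^ n := by simp
  calc (#(ballUnionSymmDiffs (ballH n r) ℓ) : ℝ) ≤ (((2 : ℝ) ^ n) ^ ℓ) ^ 2 := by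
        exact_mod_cast hcard ▸ card_ballUnionSymmDiffs_le
    _ = 2 ^ (2 * ℓ * n) := by ring
    _ ≤ Real.exp 1 ^ (2 * ℓ * n) := by
        gcongr
        linarith [Real.add_one_le_exp 1]
    _ = Real.exp (mlow n r ℓ * (2 ^ (n + 1) * ℓ * n / mlow n r ℓ) / 2 ^ n) := by
        rw [← Real.exp_nat_mul, mul_one]
        congr 1
        field_simp
        push_cast
        ring
    _ < _ := by
        rw [hcard, Nat.cast_pow, Nat.cast_ofNat]
        gcongr
        exact_mod_cast Nat.lt_floor_add_one _

end Hamming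

theorem Mid_le_of_mlow_pos_general (n r ℓ : ℕ) (hℓ : 1 ≤ ℓ)
    (hm : 0 < mlow n r ℓ) :
    (∃ C : Finset (Fin n → Bool), IdCode n r ℓ C ∧
      (C.card : ℝ) ≤ 2 ^ (n + 1) * ℓ * n / (mlow n r ℓ : ℝ) + 2) ∧
    (Mid n r ℓ : ℝ) ≤ 2 ^ (n + 1) * ℓ * n / (mlow n r ℓ : ℝ) + 2 := by
  obtain ⟨C, hCt, hC⟩ := exists_hitting_set_card_le_of_card_lt_exp
    (fun _ hD => mlow_le_card_of_mem_ballUnionSymmDiffs hD) _ (card_ballUnionSymmDiffs_lt_exp hm)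
  set B : ℝ := 2 ^ (n + 1) * ℓ * n / mlow n r ℓ
  obtain ⟨C', hCC', hC'C, hcover⟩ :=
    exists_superset_card_le_forall_inter_nonempty mem_ballH_self hℓ hC
  have hcode : IdCode n r ℓ C' := idCode_of_forall_inter_nonempty hcover
    fun D hD => (hC D hD).mono (inter_subset_inter_left hCC')
  have hcard : (#C' : ℝ) ≤ B + 2 :=
    calc (#C' : ℝ) ≤ (⌊B⌋₊ + 2 : ℕ) := by exact_mod_cast (by omega : #C' ≤ ⌊B⌋₊ + 2)
      _ ≤ B + 2 := by
        push_cast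
        gcongr
        exact Nat.floor_le (by positivity)
  exact ⟨⟨C', hcode, hcard⟩, (Nat.cast_le.2 (Mid_le_card hcode)).trans hcard⟩

/-- If `m_n(r,ℓ) > 0`, then `M_r^{(≤ℓ)}(n) ≤ 2^{n+1}·ℓ·n / m_n(r,ℓ) + 2`. -/
theorem Mid_le_of_mlow_pos (n r ℓ : ℕ) (hr : 1 ≤ r) (hℓ : 1 ≤ ℓ) (hn : 1 ≤ n)
    (hm : 0 < mlow n r ℓ) :
    (∃ C : Finset (Fin n → Bool), IdCode n r ℓ C ∧
      (C.card : ℝ) ≤ 2 ^ (n + 1) * ℓ * n / (mlow n r ℓ : ℝ) + 2) ∧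
    (Mid n r ℓ : ℝ) ≤ 2 ^ (n + 1) * ℓ * n / (mlow n r ℓ : ℝ) + 2 :=
  Mid_le_of_mlow_pos_general n r ℓ hℓ hm
end

section
/- For every n ≥ 1, every r with 0 ≤ r ≤ n − 1 and every ℓ ≥ 1, every (r,≤ℓ)-identifying code C in 𝔽ⁿ satisfies |C| ≥ max( 2ⁿ / Σ_{i=0}^{r} binom(n,i), (2ⁿ − 1) / Σ_{i=0}^{n−r−1} binom(n,i) ); in particular M_r^{(≤ℓ)}(n) ≥ M_r^{(≤1)}(n) ≥ max( 2ⁿ/V(n,r), (2ⁿ−1)/V(n,n−r−1) ), where V(n,s) = Σ_{i=0}^{s} binom(n,i). -/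
/-!
Separating `{x}` from `∅` shows that every word lies within distance `r` of a codeword, so the
`|C|` balls of radius `r` around the codewords cover `𝔽ⁿ`. Separating singletons shows that at
most one word `y` has all of `C` within distance `r`. Every other word is at distance `> r` from
some codeword `c`, i.e. at distance `≤ n - r - 1` from its complement `c̄`, so the `|C|` balls
of radius `n - r - 1` around the complements cover all words but one.
-/

open Finset

def diffSetEquiv {ι : Type*} [Fintype ι] [DecidableEq ι] (x : ι → Bool) :
    (ι → Bool) ≃ Finset ι where
  toFun y := univ.filter fun i => x i ≠ y i
  invFun S i := xor (x i) (decide (i ∈ S))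
  left_inv y := by
    funext i
    cases hx : x i <;> cases hy : y i <;> simp [hx, hy]
  right_inv S := by
    ext i
    by_cases h : i ∈ S <;> cases hx : x i <;> simp [h, hx]

lemma card_filter_hammingDist_eq {ι : Type*} [Fintype ι] [DecidableEq ι] (x : ι → Bool)
    (i : ℕ) : #{y | hammingDist x y = i} = (Fintype.card ι).choose i := by
  rw [← card_univ, ← card_powersetCard]
  exact card_equiv (diffSetEquiv x) fun y => by simp [diffSetEquiv, hammingDist]

lemma hammingDist_add_hammingDist_not {ι : Type*} [Fintype ι] [DecidableEq ι]
    (y c : ι → Bool) : hammingDist y c + hammingDist y (fun i => !c i) = Fintype.card ι := by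
  have hnot : (univ.filter fun i => y i ≠ !c i) = univ.filter fun i => ¬ y i ≠ c i :=
    filter_congr fun i _ => by cases y i <;> cases c i <;> simp
  rw [hammingDist, hammingDist, hnot, card_filter_add_card_filter_not, card_univ]

lemma card_ballH (n r : ℕ) (x : Fin n → Bool) :
    #(ballH n r x) = ∑ i ∈ range (r + 1), n.choose i := by
  rw [card_eq_sum_card_fiberwise (f := hammingDist x) (t := range (r + 1))]
  · refine sum_congr rfl fun i _ => ?_
    have hsphere := card_filter_hammingDist_eq x i
    rw [Fintype.card_fin] at hsphere
    rw [← hsphere, ballH, filter_filter]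
    congr 1
    exact filter_congr fun y _ => by grind
  · intro y hy
    simpa [ballH, Nat.lt_succ_iff] using hy

lemma sum_range_choose_pos (n s : ℕ) : 0 < ∑ i ∈ range (s + 1), n.choose i :=
  lt_of_lt_of_le (by simp) (single_le_sum (fun _ _ => Nat.zero_le _) (mem_range.2 s.succ_pos))

lemma mem_ballH_not_of_notMem_ballH {n r : ℕ} {c y : Fin n → Bool} (h : y ∉ ballH n r c) :
    y ∈ ballH n (n - r - 1) (fun i => !c i) := by
  have hsum := hammingDist_add_hammingDist_not y c
  simp only [ballH, mem_filter, mem_univ, true_and, not_le, Fintype.card_fin] at h hsum ⊢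
  rw [hammingDist_comm] at h ⊢
  omega

lemma card_le_card_mul_of_subset_biUnion_ballH {n s : ℕ} {S C : Finset (Fin n → Bool)}
    (f : (Fin n → Bool) → Fin n → Bool) (hS : S ⊆ C.biUnion fun c => ballH n s (f c)) :
    #S ≤ #C * ∑ i ∈ range (s + 1), n.choose i :=
  (card_le_card hS).trans <| card_biUnion_le_card_mul _ _ _ fun c _ => (card_ballH n s (f c)).le

namespace IdCode

variable {n r ℓ : ℕ} {C : Finset (Fin n → Bool)}

lemma ballH_inter_injective (hC : IdCode n r ℓ C) (hℓ : 1 ≤ ℓ) :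
    Function.Injective fun y => ballH n r y ∩ C := by
  intro y y' h
  by_contra hne
  exact hC.2 {y} {y'} (by simpa using hℓ) (by simpa using hℓ) (by simpa using hne)
    (by simpa using h)

lemma univ_subset_biUnion_ballH (hC : IdCode n r ℓ C) (hℓ : 1 ≤ ℓ) :
    univ ⊆ C.biUnion (ballH n r) := by
  intro x _
  have hx := hC.2 {x} ∅ (by simpa using hℓ) (by simp) (singleton_ne_empty x)
  obtain ⟨c, hc⟩ := nonempty_iff_ne_empty.2 (by simpa using hx)
  simp only [mem_inter, ballH, mem_filter, mem_univ, true_and] at hc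
  simpa [ballH, hammingDist_comm] using ⟨c, hc.2, hc.1⟩

lemma two_pow_le_card_mul (hC : IdCode n r ℓ C) (hℓ : 1 ≤ ℓ) :
    2 ^ n ≤ #C * ∑ i ∈ range (r + 1), n.choose i := by
  simpa using card_le_card_mul_of_subset_biUnion_ballH id (hC.univ_subset_biUnion_ballH hℓ)

lemma two_pow_le_card_mul_add_one (hC : IdCode n r ℓ C) (hℓ : 1 ≤ ℓ) :
    2 ^ n ≤ #C * ∑ i ∈ range (n - r - 1 + 1), n.choose i + 1 := by
  set P := univ.filter fun y => ballH n r y ∩ C = C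
  have hP : #P ≤ 1 := card_le_one.2 fun a ha b hb =>
    hC.ballH_inter_injective hℓ ((mem_filter.1 ha).2.trans (mem_filter.1 hb).2.symm)
  have hcover : univ \ P ⊆ C.biUnion fun c => ballH n (n - r - 1) fun i => !c i := by
    intro y hy
    have hfar : ¬ C ⊆ ballH n r y := fun hsub => by simp_all [P, inter_eq_right]
    obtain ⟨c, hcC, hc⟩ := not_subset.1 hfar
    refine mem_biUnion.2 ⟨c, hcC, mem_ballH_not_of_notMem_ballH ?_⟩
    simpa [ballH, hammingDist_comm] using hc
  have hcount := card_le_card_mul_of_subset_biUnion_ballH _ hcover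
  rw [card_sdiff_of_subset (subset_univ P), card_univ, Fintype.card_fun, Fintype.card_bool,
    Fintype.card_fin] at hcount
  omega

end IdCode

theorem identifying_code_card_lower_bound_general (n r ℓ : ℕ)
    (hℓ : 1 ≤ ℓ) (C : Finset (Fin n → Bool)) (hC : IdCode n r ℓ C) :
    (2 : ℝ) ^ n / (∑ i ∈ Finset.range (r + 1), (n.choose i : ℝ)) ≤ C.card ∧
    ((2 : ℝ) ^ n - 1) / (∑ i ∈ Finset.range (n - r - 1 + 1), (n.choose i : ℝ)) ≤ C.card := by
  have hV (s : ℕ) : (0 : ℝ) < ∑ i ∈ range (s + 1), (n.choose i : ℝ) := by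
    exact_mod_cast sum_range_choose_pos n s
  constructor
  · rw [div_le_iff₀ (hV r)]
    exact_mod_cast hC.two_pow_le_card_mul hℓ
  · rw [div_le_iff₀ (hV _), sub_le_iff_le_add]
    exact_mod_cast hC.two_pow_le_card_mul_add_one hℓ

/-- Every `(r,≤ℓ)`-identifying code `C` in `𝔽ⁿ` (with `0 ≤ r ≤ n-1`, `ℓ ≥ 1`)
satisfies `|C| ≥ max(2ⁿ/V(n,r), (2ⁿ-1)/V(n,n-r-1))`; hence the same lower bound holds
for `M_r^{(≤ℓ)}(n) ≥ M_r^{(≤1)}(n)`. -/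
theorem identifying_code_card_lower_bound (n r ℓ : ℕ) (hn : 1 ≤ n) (hr : r + 1 ≤ n)
    (hℓ : 1 ≤ ℓ) (C : Finset (Fin n → Bool)) (hC : IdCode n r ℓ C) :
    (2 : ℝ) ^ n / (∑ i ∈ Finset.range (r + 1), (n.choose i : ℝ)) ≤ C.card ∧
    ((2 : ℝ) ^ n - 1) / (∑ i ∈ Finset.range (n - r - 1 + 1), (n.choose i : ℝ)) ≤ C.card :=
  identifying_code_card_lower_bound_general n r ℓ hℓ C hC
end

section
/- Let ℓ ≥ 1 be a fixed integer and ε > 0. Then there exist a constant c > 0 and n₀ such that for every n ≥ n₀ and every integer r with 1 ≤ r ≤ (1/2 − ε)·n, one has m_n(r,ℓ) ≥ c·binom(n,r), where m_n(r,ℓ) is the minimum of |B_r(X) △ B_r(Y)| over all X, Y ⊆ 𝔽ⁿ with X ≠ Y, 1 ≤ |X| ≤ ℓ and 1 ≤ |Y| ≤ ℓ. -/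
/-!
Given `X ≠ Y`, pick `x ∈ X \ Y`. Flipping `x` on an `r`-set `T` of coordinates lands on the
sphere of radius `r` about `x`, and the flipped point is within distance `r` of `y` exactly when
`T` contains at least half of the `d(x, y)` coordinates where `x` and `y` differ. Forbid in `T`
the at most `ℓ D` coordinates where `x` differs from the points of `Y` at distance `≤ D`; this
loses a factor `2 ^ (ℓ D)` in `binom(n, r)` and leaves only the far points `y`. For those,
`|T ∩ diff(x, y)|` is hypergeometric with mean at most `(1/2 - ε) d(x, y)` and variance at most its
mean, so by Chebyshev it reaches `d(x, y) / 2` for at most a `1 / (2ℓ)` fraction of the `T` once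
`ε² D ≥ ℓ`. Thus half of the flipped points lie in `B_r(X) \ B_r(Y)`.
-/

open Finset

namespace Finset

variable {ι : Type*} [DecidableEq ι] {U A : Finset ι} {r k : ℕ}

theorem sum_card_powersetCard_inter_powersetCard (hA : A ⊆ U) (hk : k ≤ r) :
    ∑ T ∈ U.powersetCard r, #((T ∩ A).powersetCard k)
      = (#A).choose k * (#U - k).choose (r - k) := by
  have hsplit : ∀ T, #((T ∩ A).powersetCard k) = #{B ∈ A.powersetCard k | B ⊆ T} := fun T => by
    congr 1; ext B; simp only [mem_powersetCard, mem_filter, subset_inter_iff]; tauto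
  simp_rw [hsplit, card_filter]
  rw [sum_comm, ← card_powersetCard k A, card_eq_sum_ones, sum_mul]
  refine sum_congr rfl fun B hB => ?_
  obtain ⟨hBA, rfl⟩ := mem_powersetCard.mp hB
  rw [one_mul, ← card_filter, card_filter_powersetCard_subset B U _ (hBA.trans hA) hk]

theorem sum_choose_card_inter_mul_choose (hA : A ⊆ U) (hk : k ≤ r) :
    (∑ T ∈ U.powersetCard r, (#(T ∩ A)).choose k) * (#U).choose k
      = (#A).choose k * r.choose k * (#U).choose r := by
  have hcard : ∀ T : Finset ι, (#(T ∩ A)).choose k = #((T ∩ A).powersetCard k) :=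
    fun T => (card_powersetCard k _).symm
  simp_rw [hcard]
  rw [sum_card_powersetCard_inter_powersetCard hA hk, mul_assoc, mul_assoc, mul_comm (r.choose k),
    Nat.choose_mul hk, mul_comm ((#U).choose k)]

theorem sum_card_inter_powersetCard (hA : A ⊆ U) (hr : 1 ≤ r) (hrU : r ≤ #U) :
    ∑ T ∈ U.powersetCard r, (#(T ∩ A) : ℝ) = #A * r / #U * (#U).choose r := by
  have h := sum_choose_card_inter_mul_choose hA hr
  simp only [Nat.choose_one_right] at h
  have hU : (#U : ℝ) ≠ 0 := by positivity [(hr.trans hrU : 0 < #U)]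
  rw [div_mul_eq_mul_div, eq_div_iff hU]
  exact_mod_cast h

theorem sum_card_inter_mul_card_inter_sub_one_le (hA : A ⊆ U) (hr : 1 ≤ r) (hrU : r ≤ #U) :
    ∑ T ∈ U.powersetCard r, (#(T ∩ A) : ℝ) * (#(T ∩ A) - 1)
      ≤ (#A * r / #U) ^ 2 * (#U).choose r := by
  rcases hr.eq_or_lt with rfl | hr2
  · refine (sum_nonpos fun T hT => ?_).trans (by positivity)
    have h1 : #(T ∩ A) ≤ 1 :=
      (card_le_card inter_subset_left).trans (mem_powersetCard.mp hT).2.le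
    have h1' : (#(T ∩ A) : ℝ) ≤ 1 := by exact_mod_cast h1
    nlinarith [(#(T ∩ A)).cast_nonneg (α := ℝ)]
  have hrR : (2 : ℝ) ≤ r := by exact_mod_cast hr2
  have hrN : (r : ℝ) ≤ #U := by exact_mod_cast hrU
  have haN : (#A : ℝ) ≤ #U := by exact_mod_cast card_le_card hA
  set S := ∑ T ∈ U.powersetCard r, (#(T ∩ A) : ℝ) * (#(T ∩ A) - 1)
  set N : ℝ := ↑(#U)
  set a : ℝ := ↑(#A)
  set C : ℝ := ↑((#U).choose r)
  have hmoment : S * (N * (N - 1)) = a * (a - 1) * (r * (r - 1)) * C := by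
    have h := congrArg (Nat.cast (R := ℝ)) (sum_choose_card_inter_mul_choose hA hr2)
    push_cast [Nat.cast_choose_two] at h
    rw [← sum_div] at h
    linear_combination 4 * h
  have ha : 0 ≤ a := by positivity
  have hC : 0 ≤ C := by positivity
  have hcross : (a - 1) * (r - 1) * N ≤ a * r * (N - 1) := by
    nlinarith [mul_nonneg ha (sub_nonneg.mpr hrN)]
  have key : S * N ^ 2 * (N - 1) ≤ (a * r) ^ 2 * C * (N - 1) :=
    calc S * N ^ 2 * (N - 1) = a * r * C * ((a - 1) * (r - 1) * N) := by
          linear_combination N * hmoment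
      _ ≤ a * r * C * (a * r * (N - 1)) := by gcongr
      _ = (a * r) ^ 2 * C * (N - 1) := by ring
  rw [div_pow, div_mul_eq_mul_div, le_div_iff₀ (by nlinarith)]
  exact le_of_mul_le_mul_right key (by linarith)

theorem sum_sq_card_inter_sub_le (hA : A ⊆ U) (hr : 1 ≤ r) (hrU : r ≤ #U) :
    ∑ T ∈ U.powersetCard r, ((#(T ∩ A) : ℝ) - #A * r / #U) ^ 2
      ≤ #A * r / #U * (#U).choose r := by
  set μ : ℝ := #A * r / #U
  have hmean := sum_card_inter_powersetCard hA hr hrU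
  have hfactorial := sum_card_inter_mul_card_inter_sub_one_le hA hr hrU
  have hexpand : ∑ T ∈ U.powersetCard r, ((#(T ∩ A) : ℝ) - μ) ^ 2
      = ∑ T ∈ U.powersetCard r, (#(T ∩ A) : ℝ) * (#(T ∩ A) - 1)
        + (1 - 2 * μ) * ∑ T ∈ U.powersetCard r, (#(T ∩ A) : ℝ) + μ ^ 2 * (#U).choose r := by
    rw [← card_powersetCard, card_eq_sum_ones, Nat.cast_sum, mul_sum, mul_sum,
      ← sum_add_distrib, ← sum_add_distrib]
    exact sum_congr rfl fun T _ => by push_cast; ring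
  rw [hexpand, hmean]
  linarith

theorem two_mul_sq_mul_card_filter_le {d : ℕ} {ε : ℝ} (hAd : #A ≤ d) (hε : 0 ≤ ε)
    (hr : 1 ≤ r) (hrU : r ≤ (1 / 2 - ε) * #U) :
    2 * ε ^ 2 * d * #{T ∈ U.powersetCard r | d ≤ 2 * #(T ∩ A)} ≤ (#U).choose r := by
  have hinter : ∀ T ∈ U.powersetCard r, T ∩ A = T ∩ (U ∩ A) := fun T hT => by
    rw [← inter_assoc, inter_eq_left.mpr (mem_powersetCard.mp hT).1]
  rw [filter_congr fun T hT => by rw [hinter T hT]]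
  set A' := U ∩ A
  have hA'd : (#A' : ℝ) ≤ d := by exact_mod_cast (card_le_card inter_subset_right).trans hAd
  have hrR : (1 : ℝ) ≤ r := by exact_mod_cast hr
  have hN : (0 : ℝ) < #U := by nlinarith
  have hrN : r ≤ #U := by exact_mod_cast (by nlinarith : (r : ℝ) ≤ #U)
  set μ : ℝ := #A' * r / #U
  have hμ : 2 * μ ≤ (1 - 2 * ε) * d := by
    have hε' : 0 ≤ 1 - 2 * ε := by nlinarith
    calc 2 * μ = 2 * #A' * (r / #U) := by ring
      _ ≤ 2 * #A' * (1 / 2 - ε) := by gcongr; rwa [div_le_iff₀ hN]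
      _ = (1 - 2 * ε) * #A' := by ring
      _ ≤ (1 - 2 * ε) * d := by gcongr
  set bad := {T ∈ U.powersetCard r | d ≤ 2 * #(T ∩ A')}
  have hcheb : #bad * (ε * d) ^ 2 ≤ ∑ T ∈ U.powersetCard r, ((#(T ∩ A') : ℝ) - μ) ^ 2 := by
    rw [← nsmul_eq_mul]
    refine (card_nsmul_le_sum _ _ _ fun T hT => ?_).trans
      (sum_le_sum_of_subset_of_nonneg (filter_subset _ _) fun _ _ _ => sq_nonneg _)
    have hT : (d : ℝ) ≤ 2 * #(T ∩ A') := by exact_mod_cast (mem_filter.mp hT).2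
    exact pow_le_pow_left₀ (by positivity) (by linarith) 2
  have hvar := sum_sq_card_inter_sub_le (inter_subset_left : A' ⊆ U) hr hrN
  rcases (Nat.zero_le d).eq_or_lt with rfl | hd
  · simp
  have hdR : (0 : ℝ) < d := by exact_mod_cast hd
  have h2μC : 2 * μ * (#U).choose r ≤ d * (#U).choose r := by
    gcongr; nlinarith
  refine le_of_mul_le_mul_right ?_ hdR
  nlinarith

end Finset

theorem Nat.choose_le_two_mul_choose_sub_one {K r : ℕ} (h : 2 * r < K) :
    K.choose r ≤ 2 * (K - 1).choose r := by
  obtain ⟨m, rfl⟩ : ∃ m, K = m + 1 := ⟨K - 1, by omega⟩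
  rcases r with _ | s
  · simp
  · rw [Nat.choose_succ_succ', Nat.add_sub_cancel, two_mul]
    gcongr
    exact Nat.choose_le_succ_of_lt_half_left (by omega)

theorem Nat.choose_le_two_pow_mul_choose_sub {M r s : ℕ} (h : 2 * r + s ≤ M) :
    M.choose r ≤ 2 ^ s * (M - s).choose r := by
  induction s with
  | zero => simp
  | succ s ih =>
    calc M.choose r ≤ 2 ^ s * (M - s).choose r := ih (by omega)
      _ ≤ 2 ^ s * (2 * (M - s - 1).choose r) := by
          gcongr; exact Nat.choose_le_two_mul_choose_sub_one (by omega)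
      _ = 2 ^ (s + 1) * (M - (s + 1)).choose r := by rw [pow_succ, Nat.sub_sub]; ring

theorem Finset.card_symmDiff_le_card_right_iff {ι : Type*} [DecidableEq ι] (A T : Finset ι) :
    #(symmDiff A T) ≤ #T ↔ #A ≤ 2 * #(T ∩ A) := by
  have hsymm : #(symmDiff A T) = #(A \ T) + #(T \ A) :=
    card_union_of_disjoint disjoint_sdiff_sdiff
  have hA := card_sdiff_add_card_inter A T
  have hT := card_sdiff_add_card_inter T A
  rw [inter_comm] at hA
  omega

section Hamming

variable {ι : Type*} [Fintype ι]

def diffCoords (x y : ι → Bool) : Finset ι := {i | x i ≠ y i}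

theorem hammingDist_eq_card_diffCoords (x y : ι → Bool) :
    hammingDist x y = #(diffCoords x y) := rfl

variable [DecidableEq ι]

def flipAt (x : ι → Bool) (T : Finset ι) : ι → Bool := fun i => if i ∈ T then !x i else x i

theorem diffCoords_flipAt_right (x : ι → Bool) (T : Finset ι) : diffCoords x (flipAt x T) = T := by
  ext i
  by_cases h : i ∈ T <;> simp [diffCoords, flipAt, h]

theorem flipAt_injective (x : ι → Bool) : Function.Injective (flipAt x) := fun T T' h => by
  rw [← diffCoords_flipAt_right x T, h, diffCoords_flipAt_right]

theorem hammingDist_flipAt_right (x : ι → Bool) (T : Finset ι) :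
    hammingDist x (flipAt x T) = #T := by
  rw [hammingDist_eq_card_diffCoords, diffCoords_flipAt_right]

theorem diffCoords_flipAt_left (x y : ι → Bool) (T : Finset ι) :
    diffCoords (flipAt x T) y = symmDiff (diffCoords x y) T := by
  ext i
  simp only [diffCoords, mem_filter, mem_univ, true_and, mem_symmDiff]
  unfold flipAt
  by_cases h : i ∈ T <;> cases x i <;> cases y i <;> simp [h]

theorem hammingDist_flipAt_left_le_card_iff (x y : ι → Bool) (T : Finset ι) :
    hammingDist (flipAt x T) y ≤ #T ↔ hammingDist x y ≤ 2 * #(T ∩ diffCoords x y) := by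
  rw [hammingDist_eq_card_diffCoords, diffCoords_flipAt_left, card_symmDiff_le_card_right_iff,
    hammingDist_eq_card_diffCoords]

def nearCoords (x : ι → Bool) (W : Finset (ι → Bool)) (D : ℕ) : Finset ι :=
  {y ∈ W | hammingDist x y ≤ D}.biUnion (diffCoords x)

theorem card_nearCoords_le (x : ι → Bool) (W : Finset (ι → Bool)) (D : ℕ) :
    #(nearCoords x W D) ≤ #W * D :=
  (card_biUnion_le_card_mul _ _ D fun _ hy => (mem_filter.mp hy).2).trans
    (Nat.mul_le_mul_right D (card_filter_le _ _))

theorem lt_hammingDist_of_disjoint_nearCoords {x y : ι → Bool} {W : Finset (ι → Bool)} {D : ℕ}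
    {T : Finset ι} (hT : Disjoint T (nearCoords x W D)) (hy : y ∈ W) (hxy : x ≠ y)
    (hdist : hammingDist x y ≤ 2 * #(T ∩ diffCoords x y)) : D < hammingDist x y := by
  by_contra! hnear
  have hsub : diffCoords x y ⊆ nearCoords x W D :=
    subset_biUnion_of_mem (diffCoords x) (mem_filter.mpr ⟨hy, hnear⟩)
  rw [disjoint_iff_inter_eq_empty.mp (hT.mono_right hsub), card_empty] at hdist
  exact hxy (hammingDist_eq_zero.mp (by omega))

end Hamming

section Balls

variable {n r : ℕ}

theorem mem_ballH {x z : Fin n → Bool} : z ∈ ballH n r x ↔ hammingDist x z ≤ r := by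
  simp [ballH]

theorem card_filter_flipAt_notMem_le (x : Fin n → Bool) (W : Finset (Fin n → Bool))
    (U : Finset (Fin n)) :
    #{T ∈ U.powersetCard r | flipAt x T ∉ W.biUnion (ballH n r)}
      ≤ #(ballH n r x \ W.biUnion (ballH n r)) := by
  refine card_le_card_of_injOn (flipAt x) (fun T hT => ?_) (flipAt_injective x).injOn
  rw [mem_coe, mem_filter, mem_powersetCard] at hT
  rw [mem_coe, mem_sdiff, mem_ballH, hammingDist_flipAt_right, hT.1.2]
  exact ⟨le_rfl, hT.2⟩

theorem two_mul_card_filter_flipAt_mem_le {x : Fin n → Bool} {W : Finset (Fin n → Bool)}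
    {U : Finset (Fin n)} {D : ℕ} {ε : ℝ} (hU : Disjoint U (nearCoords x W D)) (hxW : x ∉ W)
    (hWD : (#W : ℝ) ≤ ε ^ 2 * D) (hε : 0 ≤ ε) (hr : 1 ≤ r) (hrU : r ≤ (1 / 2 - ε) * #U) :
    2 * #{T ∈ U.powersetCard r | flipAt x T ∈ W.biUnion (ballH n r)} ≤ (#U).choose r := by
  rcases W.eq_empty_or_nonempty with rfl | hW
  · simp
  set bad := {T ∈ U.powersetCard r | flipAt x T ∈ W.biUnion (ballH n r)}
  set far := {y ∈ W | D < hammingDist x y}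
  set piece : (Fin n → Bool) → Finset (Finset (Fin n)) := fun y =>
    {T ∈ U.powersetCard r | hammingDist x y ≤ 2 * #(T ∩ diffCoords x y)}
  have hcover : bad ⊆ far.biUnion piece := by
    intro T hT
    obtain ⟨hTP, hTball⟩ := mem_filter.mp hT
    obtain ⟨y, hy, hTy⟩ := mem_biUnion.mp hTball
    obtain ⟨hTU, hTr⟩ := mem_powersetCard.mp hTP
    rw [mem_ballH, hammingDist_comm, ← hTr, hammingDist_flipAt_left_le_card_iff] at hTy
    have hfar := lt_hammingDist_of_disjoint_nearCoords (disjoint_of_subset_left hTU hU) hy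
      (fun h => hxW (h ▸ hy)) hTy
    exact mem_biUnion.mpr ⟨y, mem_filter.mpr ⟨hy, hfar⟩, mem_filter.mpr ⟨hTP, hTy⟩⟩
  have hpiece : ∀ y ∈ far, 2 * #W * (#(piece y) : ℝ) ≤ (#U).choose r := fun y hy => by
    have hDy : (D : ℝ) ≤ hammingDist x y := by exact_mod_cast (mem_filter.mp hy).2.le
    have hWy : 2 * (#W : ℝ) ≤ 2 * ε ^ 2 * hammingDist x y := by
      nlinarith [mul_le_mul_of_nonneg_left hDy (sq_nonneg ε)]
    exact (mul_le_mul_of_nonneg_right hWy (Nat.cast_nonneg _)).trans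
      (two_mul_sq_mul_card_filter_le (hammingDist_eq_card_diffCoords x y).ge hε hr hrU)
  have hbad : (#bad : ℝ) ≤ ∑ y ∈ far, (#(piece y) : ℝ) := by
    exact_mod_cast (card_le_card hcover).trans card_biUnion_le
  have hfar : (#far : ℝ) ≤ #W := by exact_mod_cast card_filter_le _ _
  suffices h : (#W : ℝ) * (2 * #bad) ≤ #W * (#U).choose r by
    exact_mod_cast le_of_mul_le_mul_left h (by exact_mod_cast hW.card_pos)
  calc (#W : ℝ) * (2 * #bad) = 2 * #W * #bad := by ring
    _ ≤ 2 * #W * ∑ y ∈ far, (#(piece y) : ℝ) := by gcongr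
    _ = ∑ y ∈ far, 2 * #W * (#(piece y) : ℝ) := by rw [mul_sum]
    _ ≤ ∑ _y ∈ far, ((#U).choose r : ℝ) := sum_le_sum hpiece
    _ = #far * (#U).choose r := by rw [sum_const, nsmul_eq_mul]
    _ ≤ #W * (#U).choose r := by gcongr

theorem choose_le_two_pow_mul_card_ballH_sdiff {ℓ D : ℕ} {ε : ℝ} (hε : 0 ≤ ε) (hr : 1 ≤ r)
    (hℓD : (ℓ : ℝ) ≤ ε ^ 2 * D) (hrn : r + ℓ * D ≤ (1 / 2 - ε) * n)
    {x : Fin n → Bool} {W : Finset (Fin n → Bool)} (hxW : x ∉ W) (hW : #W ≤ ℓ) :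
    n.choose r ≤ 2 ^ (ℓ * D + 1) * #(ballH n r x \ W.biUnion (ballH n r)) := by
  set S := nearCoords x W D
  have hS : #S ≤ ℓ * D := (card_nearCoords_le x W D).trans (Nat.mul_le_mul_right D hW)
  have hSR : (#S : ℝ) ≤ ℓ * D := by exact_mod_cast hS
  have hSn : #S ≤ n := (card_le_univ S).trans_eq (Fintype.card_fin n)
  have hUcard : #Sᶜ = n - #S := by rw [card_compl, Fintype.card_fin]
  have hrR : (1 : ℝ) ≤ r := by exact_mod_cast hr
  have hℓD0 : (0 : ℝ) ≤ ℓ * D := by positivity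
  have hn0 : (0 : ℝ) ≤ n := by positivity
  have hε' : ε < 1 / 2 := by nlinarith
  have hrU : (r : ℝ) ≤ (1 / 2 - ε) * #Sᶜ := by
    rw [hUcard, Nat.cast_sub hSn]; nlinarith
  have h2rS : 2 * r + #S ≤ n := by
    have h : (2 * r + #S : ℝ) ≤ n := by nlinarith
    exact_mod_cast h
  have hbad := two_mul_card_filter_flipAt_mem_le (disjoint_compl_left : Disjoint Sᶜ S) hxW
    ((Nat.cast_le.mpr hW).trans hℓD) hε hr hrU
  have hgood := card_filter_flipAt_notMem_le (r := r) x W Sᶜ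
  have hsplit := card_filter_add_card_filter_not (s := Sᶜ.powersetCard r)
    (fun T => flipAt x T ∈ W.biUnion (ballH n r))
  rw [card_powersetCard] at hsplit
  calc n.choose r ≤ 2 ^ #S * (#Sᶜ).choose r := hUcard ▸ Nat.choose_le_two_pow_mul_choose_sub h2rS
    _ ≤ 2 ^ (ℓ * D) * (2 * #(ballH n r x \ W.biUnion (ballH n r))) := by
        gcongr
        · norm_num
        · omega
    _ = 2 ^ (ℓ * D + 1) * #(ballH n r x \ W.biUnion (ballH n r)) := by ring

end Balls

theorem choose_le_two_pow_mul_card_symmDiff_biUnion_ballH {n r ℓ D : ℕ} {ε : ℝ} (hε : 0 ≤ ε)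
    (hr : 1 ≤ r) (hℓD : (ℓ : ℝ) ≤ ε ^ 2 * D) (hrn : r + ℓ * D ≤ (1 / 2 - ε) * n)
    {X Y : Finset (Fin n → Bool)} (hXY : X ≠ Y) (hX : #X ≤ ℓ) (hY : #Y ≤ ℓ) :
    n.choose r ≤ 2 ^ (ℓ * D + 1)
      * #(symmDiff (X.biUnion (ballH n r)) (Y.biUnion (ballH n r))) := by
  have hsdiff : ∀ {X Y : Finset (Fin n → Bool)} {x}, x ∈ X → x ∉ Y → #Y ≤ ℓ →
      n.choose r ≤ 2 ^ (ℓ * D + 1) * #(X.biUnion (ballH n r) \ Y.biUnion (ballH n r)) :=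
    fun hxX hxY hY => (choose_le_two_pow_mul_card_ballH_sdiff hε hr hℓD hrn hxY hY).trans
      (by gcongr; exact subset_biUnion_of_mem _ hxX)
  obtain ⟨x, hx⟩ := symmDiff_nonempty.mpr hXY
  rcases mem_symmDiff.mp hx with ⟨hxX, hxY⟩ | ⟨hxY, hxX⟩
  · exact (hsdiff hxX hxY hY).trans (by gcongr; exact le_sup_left)
  · exact (hsdiff hxY hxX hX).trans (by gcongr; exact le_sup_right)

theorem exists_card_symmDiff_eq_mlow {n r ℓ : ℕ} (hn : 1 ≤ n) (hℓ : 1 ≤ ℓ) :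
    ∃ X Y : Finset (Fin n → Bool), X ≠ Y ∧ #X ≤ ℓ ∧ #Y ≤ ℓ ∧
      #(symmDiff (X.biUnion (ballH n r)) (Y.biUnion (ballH n r))) = mlow n r ℓ := by
  have hne : ({fun _ => false} : Finset (Fin n → Bool)) ≠ {fun _ => true} := by
    simpa using fun h => Bool.false_ne_true (congrFun h ⟨0, hn⟩)
  obtain ⟨X, Y, hXY, -, hX, -, hY, h⟩ := Nat.sInf_mem (s := {k | ∃ X Y : Finset (Fin n → Bool),
      X ≠ Y ∧ 1 ≤ #X ∧ #X ≤ ℓ ∧ 1 ≤ #Y ∧ #Y ≤ ℓ ∧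
        #(symmDiff (X.biUnion (ballH n r)) (Y.biUnion (ballH n r))) = k})
    ⟨_, _, _, hne, by simp, by simpa using hℓ, by simp, by simpa using hℓ, rfl⟩
  exact ⟨X, Y, hXY, hX, hY, h⟩

/-- For fixed `ℓ ≥ 1` and `ε > 0`, there are `c > 0` and `n₀` such that for
all `n ≥ n₀` and `1 ≤ r ≤ (1/2 - ε)n`, one has `m_n(r,ℓ) ≥ c·binom(n,r)`. -/
theorem mlow_lower_bound (ℓ : ℕ) (hℓ : 1 ≤ ℓ) (ε : ℝ) (hε : 0 < ε) :
    ∃ (c : ℝ), 0 < c ∧ ∃ n₀ : ℕ, ∀ n : ℕ, n₀ ≤ n →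
      ∀ r : ℕ, 1 ≤ r → (r : ℝ) ≤ (1 / 2 - ε) * n →
        c * (n.choose r) ≤ (mlow n r ℓ : ℝ) := by
  -- run the argument with `ε / 2`; the other half of `ε` pays for the `ℓ * D` forbidden coordinates
  set D := ⌈ℓ / (ε / 2) ^ 2⌉₊
  have hℓD : (ℓ : ℝ) ≤ (ε / 2) ^ 2 * D := by
    have := Nat.le_ceil ((ℓ : ℝ) / (ε / 2) ^ 2)
    rwa [div_le_iff₀ (by positivity), mul_comm] at this
  refine ⟨1 / 2 ^ (ℓ * D + 1), by positivity, ⌈2 * ℓ * D / ε⌉₊, fun n hn r hr hrn => ?_⟩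
  have hεn : 2 * ℓ * D ≤ ε * n := by
    have := (Nat.le_ceil _).trans (Nat.cast_le.mpr hn)
    rw [div_le_iff₀ hε] at this
    linarith
  have hn1 : 1 ≤ n := by
    have : (1 : ℝ) ≤ n := by nlinarith [(Nat.one_le_cast (α := ℝ)).mpr hr]
    exact_mod_cast this
  obtain ⟨X, Y, hXY, hX, hY, hmlow⟩ := exists_card_symmDiff_eq_mlow (r := r) hn1 hℓ
  have hbound := choose_le_two_pow_mul_card_symmDiff_biUnion_ballH (by positivity) hr hℓD
    (by nlinarith) hXY hX hY
  rw [hmlow] at hbound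
  rw [one_div, inv_mul_le_iff₀ (by positivity)]
  exact_mod_cast hbound
end
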